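/- Let G = (V, E, c) be a connected labeled directed graph in which every edge has a distinct label (|C| = |E| and c is injective). Let G' be obtained from G by reversing the directions of an arbitrary subset of edges. Then Lie(G) ≅ Lie(G'). -/

import Mathlib

/-!
Reversing an edge `x → y` with label `l` only changes the sign of `⁅x, y⁆ = l`. Since
distinct edges carry distinct labels, each of these sign changes can be absorbed by
replacing the basis vector `l` of `Lie(G')` by `-l`. The rescaled basis of `Lie(G')` then
satisfies the defining relations of `Lie(G)`, and two Lie algebras with bases satisfying
the same relations of `Lie(G)` are isomorphic through the linear map matching the bases.
-/

/-- A finite simple directed graph with edge labels: `lab x y = some l` means there is a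
directed edge from `x` to `y` carrying label `l`. Simplicity: no loops, and at most one
of the two directions between a pair of vertices carries an edge. -/
structure LabeledDigraph (V C : Type*) where
  lab : V → V → Option C
  no_loops : ∀ v, lab v v = none
  one_dir : ∀ x y, (lab x y).isSome → lab y x = none

/-- Adjacency in the underlying undirected graph. -/
def LabeledDigraph.adj {V C : Type*} (G : LabeledDigraph V C) (x y : V) : Prop :=
  (G.lab x y).isSome ∨ (G.lab y x).isSome

/-- A Lie algebra `L` over `F` together with a basis `b` indexed by the vertices and the
labels realizes `Lie(G)` if the bracket of two vertices joined by an edge is the label of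
that edge (with a sign given by the orientation, which follows from antisymmetry), the
bracket of non-adjacent vertices is zero, and all labels are central. -/
def IsGraphLieAlg {V C F L : Type*} [Field F] [LieRing L] [LieAlgebra F L]
    (G : LabeledDigraph V C) (b : Module.Basis (V ⊕ C) F L) : Prop :=
  (∀ (x y : V) (l : C), G.lab x y = some l →
      ⁅b (Sum.inl x), b (Sum.inl y)⁆ = b (Sum.inr l)) ∧
  (∀ x y : V, G.lab x y = none → G.lab y x = none →
      ⁅b (Sum.inl x), b (Sum.inl y)⁆ = 0) ∧
  (∀ (l : C) (z : L), ⁅b (Sum.inr l), z⁆ = 0)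

open Module

theorem LinearMap.map_lie_of_basis {ι R L L' : Type*} [CommRing R]
    [LieRing L] [LieAlgebra R L] [LieRing L'] [LieAlgebra R L']
    (f : L →ₗ[R] L') (b : Basis ι R L) (h : ∀ i j, f ⁅b i, b j⁆ = ⁅f (b i), f (b j)⁆)
    (x y : L) : f ⁅x, y⁆ = ⁅f x, f y⁆ := by
  have hbil : (LieModule.toEnd R L L : L →ₗ[R] Module.End R L).compr₂ f =
      (LieModule.toEnd R L' L' : L' →ₗ[R] Module.End R L').compl₁₂ f f :=
    LinearMap.ext_basis b b fun i j => by simpa using h i j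
  simpa using LinearMap.congr_fun₂ hbil x y

namespace IsGraphLieAlg

variable {V C F L L' : Type*} [Field F] [LieRing L] [LieAlgebra F L]
  [LieRing L'] [LieAlgebra F L'] {G : LabeledDigraph V C}

theorem lie_of_lab_swap {b : Basis (V ⊕ C) F L} (hb : IsGraphLieAlg G b) {x y : V} {l : C}
    (h : G.lab y x = some l) : ⁅b (Sum.inl x), b (Sum.inl y)⁆ = -b (Sum.inr l) := by
  rw [← lie_skew, hb.1 y x l h]

theorem lie_inr_right {b : Basis (V ⊕ C) F L} (hb : IsGraphLieAlg G b) (z : L) (l : C) :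
    ⁅z, b (Sum.inr l)⁆ = 0 := by
  rw [← lie_skew, hb.2.2, neg_zero]

theorem map_lie_basis {b : Basis (V ⊕ C) F L} {b' : Basis (V ⊕ C) F L'}
    (hb : IsGraphLieAlg G b) (hb' : IsGraphLieAlg G b') (f : L →ₗ[F] L')
    (hf : ∀ i, f (b i) = b' i) (i j : V ⊕ C) : f ⁅b i, b j⁆ = ⁅f (b i), f (b j)⁆ := by
  rw [hf, hf]
  rcases i with x | l
  · rcases j with y | l
    · rcases hxy : G.lab x y with _ | l
      · rcases hyx : G.lab y x with _ | l
        · rw [hb.2.1 x y hxy hyx, hb'.2.1 x y hxy hyx, map_zero]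
        · rw [hb.lie_of_lab_swap hyx, hb'.lie_of_lab_swap hyx, map_neg, hf]
      · rw [hb.1 x y l hxy, hb'.1 x y l hxy, hf]
    · rw [hb.lie_inr_right, hb'.lie_inr_right, map_zero]
  · rw [hb.2.2, hb'.2.2, map_zero]

noncomputable def lieEquiv {b : Basis (V ⊕ C) F L} {b' : Basis (V ⊕ C) F L'}
    (hb : IsGraphLieAlg G b) (hb' : IsGraphLieAlg G b') : L ≃ₗ⁅F⁆ L' :=
  { b.equiv b' (Equiv.refl _) with
    map_lie' := fun {x y} => (b.equiv b' (Equiv.refl _) : L →ₗ[F] L').map_lie_of_basis b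
      (hb.map_lie_basis hb' _ fun i => b.equiv_apply i b' _) x y }

end IsGraphLieAlg

namespace LabeledDigraph

variable {V C : Type*}

open Classical in
noncomputable def orientationSign (F : Type*) [Field F] (G G' : LabeledDigraph V C)
    (l : C) : Fˣ :=
  if ∃ x y, G.lab x y = some l ∧ G'.lab x y = some l then 1 else -1

end LabeledDigraph

theorem IsGraphLieAlg.unitsSMul_orientationSign {V C F L : Type*} [Field F] [LieRing L]
    [LieAlgebra F L] {G G' : LabeledDigraph V C}
    (hinj : ∀ (x y x' y' : V) (l : C),
        G.lab x y = some l → G.lab x' y' = some l → x = x' ∧ y = y')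
    (hflip : ∀ x y : V,
        (G'.lab x y = G.lab x y ∧ G'.lab y x = G.lab y x) ∨
        (G'.lab x y = G.lab y x ∧ G'.lab y x = G.lab x y))
    {b : Basis (V ⊕ C) F L} (hb : IsGraphLieAlg G' b) :
    IsGraphLieAlg G (b.unitsSMul (Sum.elim 1 (G.orientationSign F G'))) := by
  simp only [IsGraphLieAlg, Basis.unitsSMul_apply, Sum.elim_inl, Sum.elim_inr, Pi.one_apply,
    one_smul, Units.smul_def, smul_lie, hb.2.2, smul_zero, implies_true, and_true]
  refine ⟨fun x y l hxy => ?_, fun x y hxy hyx => ?_⟩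
  · rcases hflip x y with ⟨hkept, -⟩ | ⟨hrev, hrev'⟩
    · have hsign : G.orientationSign F G' l = 1 := if_pos ⟨x, y, hxy, hkept.trans hxy⟩
      rw [hsign, hb.1 x y l (hkept.trans hxy), Units.val_one, one_smul]
    · have hyx : G'.lab x y = none := hrev.trans (G.one_dir x y (by simp [hxy]))
      -- by injectivity of the labeling, `x → y` is the only edge of `G` labelled `l`
      have hsign : G.orientationSign F G' l = -1 := if_neg fun ⟨x', y', h, h'⟩ => by
        obtain ⟨rfl, rfl⟩ := hinj x y x' y' l hxy h
        simp [hyx] at h'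
      rw [hsign, hb.lie_of_lab_swap (hrev'.trans hxy), Units.val_neg, Units.val_one,
        neg_one_smul]
  · rcases hflip x y with ⟨h, h'⟩ | ⟨h, h'⟩
    · exact hb.2.1 x y (h.trans hxy) (h'.trans hyx)
    · exact hb.2.1 x y (h.trans hyx) (h'.trans hxy)

theorem stmt8_general {V C F L L' : Type*} [Field F]
    [LieRing L] [LieAlgebra F L] [LieRing L'] [LieAlgebra F L']
    (G G' : LabeledDigraph V C)
    (hinj : ∀ (x y x' y' : V) (l : C),
        G.lab x y = some l → G.lab x' y' = some l → x = x' ∧ y = y')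
    (hflip : ∀ x y : V,
        (G'.lab x y = G.lab x y ∧ G'.lab y x = G.lab y x) ∨
        (G'.lab x y = G.lab y x ∧ G'.lab y x = G.lab x y))
    (b : Module.Basis (V ⊕ C) F L) (hb : IsGraphLieAlg G b)
    (b' : Module.Basis (V ⊕ C) F L') (hb' : IsGraphLieAlg G' b') :
    Nonempty (L ≃ₗ⁅F⁆ L') :=
  ⟨hb.lieEquiv (hb'.unitsSMul_orientationSign hinj hflip)⟩

/-- If `G` is connected and every edge carries a distinct label (the labeling is a
bijection between edges and labels), and `G'` is obtained from `G` by reversing the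
directions of an arbitrary subset of the edges, then `Lie(G) ≅ Lie(G')`. -/
theorem stmt8 {V C F L L' : Type*} [Field F]
    [LieRing L] [LieAlgebra F L] [LieRing L'] [LieAlgebra F L']
    (hchar : (2 : F) ≠ 0)
    (G G' : LabeledDigraph V C)
    (hconn : ∀ x y : V, Relation.ReflTransGen G.adj x y)
    (hinj : ∀ (x y x' y' : V) (l : C),
        G.lab x y = some l → G.lab x' y' = some l → x = x' ∧ y = y')
    (hsurj : ∀ l : C, ∃ x y : V, G.lab x y = some l)
    (hflip : ∀ x y : V,
        (G'.lab x y = G.lab x y ∧ G'.lab y x = G.lab y x) ∨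
        (G'.lab x y = G.lab y x ∧ G'.lab y x = G.lab x y))
    (b : Module.Basis (V ⊕ C) F L) (hb : IsGraphLieAlg G b)
    (b' : Module.Basis (V ⊕ C) F L') (hb' : IsGraphLieAlg G' b') :
    Nonempty (L ≃ₗ⁅F⁆ L') :=
  stmt8_general G G' hinj hflip b hb b' hb'
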